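/- Let B be a real matrix with columns b_1, ..., b_n each of unit Euclidean norm, and let μ(B) = max_{i≠j} |b_i^T b_j| be its mutual coherence. Suppose c = B q_* where q_* ∈ ℝ^n satisfies ‖q_*‖_0 < (1/2)(1 + 1/μ(B)). Then q_* is the unique solution of the convex problem: minimize ‖q‖_1 subject to B q = c; that is, every q ∈ ℝ^n with B q = c and q ≠ q_* satisfies ‖q‖_1 > ‖q_*‖_1. -/

import Mathlib

/-- Mutual coherence of a matrix `B` (whose columns are assumed unit-norm):
the supremum of `|b_i^T b_j|` over pairs of distinct columns. -/
noncomputable def mutualCoherence {d n : ℕ} (B : Matrix (Fin d) (Fin n) ℝ) : ℝ :=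
  sSup {x : ℝ | ∃ i j : Fin n, i ≠ j ∧ x = |∑ k, B k i * B k j|}

/-- `‖q‖₀`: the number of nonzero entries of `q`. -/
noncomputable def l0norm {n : ℕ} (q : Fin n → ℝ) : ℕ :=
  (Finset.univ.filter fun i => q i ≠ 0).card

/-! The difference `h = q - q⋆` lies in the kernel of `B`, hence of the Gram matrix `Bᵀ B`, whose
diagonal is `1` and whose off-diagonal entries are at most `μ = μ(B)`. Reading off the `i`-th
row of `Bᵀ B h = 0` gives `(1 + μ) |h i| ≤ μ ‖h‖₁`, so on the support `S` of `q⋆`, which has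
fewer than `(1 + 1/μ)/2` elements, `h` carries strictly less than half of its `ℓ¹` mass. Then
`‖q⋆ + h‖₁ ≥ ‖q⋆‖₁ - ∑_{S} |h i| + ∑_{Sᶜ} |h i| > ‖q⋆‖₁`. -/

open Finset Matrix

lemma mutualCoherence_nonneg {d n : ℕ} (B : Matrix (Fin d) (Fin n) ℝ) :
    0 ≤ mutualCoherence B :=
  Real.sSup_nonneg fun _ ⟨_, _, _, hx⟩ => hx ▸ abs_nonneg _

lemma abs_gram_le_mutualCoherence {d n : ℕ} (B : Matrix (Fin d) (Fin n) ℝ) {i j : Fin n}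
    (hij : i ≠ j) : |(Bᵀ * B) i j| ≤ mutualCoherence B := by
  have hfin : {x : ℝ | ∃ i j : Fin n, i ≠ j ∧ x = |∑ k, B k i * B k j|}.Finite :=
    (Set.finite_range fun p : Fin n × Fin n => |∑ k, B k p.1 * B k p.2|).subset
      fun _ ⟨i, j, _, hx⟩ => ⟨(i, j), hx.symm⟩
  exact le_csSup hfin.bddAbove ⟨i, j, hij, rfl⟩

section

variable {ι : Type*} [Fintype ι]

lemma one_add_mul_abs_le_of_mulVec_eq_zero [DecidableEq ι] {G : Matrix ι ι ℝ} {μ : ℝ}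
    (hdiag : ∀ i, G i i = 1) (hoff : ∀ i j, i ≠ j → |G i j| ≤ μ) {h : ι → ℝ}
    (hker : G *ᵥ h = 0) (i : ι) : (1 + μ) * |h i| ≤ μ * ∑ j, |h j| := by
  have hrow : h i = -∑ j ∈ univ.erase i, G i j * h j := by
    have := congrFun hker i
    simp only [mulVec, dotProduct, Pi.zero_apply] at this
    rw [← add_sum_erase _ _ (mem_univ i), hdiag, one_mul] at this
    linarith
  have hbound : |h i| ≤ μ * ∑ j ∈ univ.erase i, |h j| := by
    rw [hrow, abs_neg, mul_sum]
    refine (abs_sum_le_sum_abs _ _).trans (sum_le_sum fun j hj => ?_)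
    rw [abs_mul]
    exact mul_le_mul_of_nonneg_right (hoff i j (ne_of_mem_erase hj).symm) (abs_nonneg _)
  rw [sum_erase_eq_sub (mem_univ i)] at hbound
  linarith

lemma two_mul_sum_abs_lt_of_abs_le {μ : ℝ} (hμ : 0 ≤ μ) {h : ι → ℝ} (hh : h ≠ 0)
    (hcoh : ∀ i, (1 + μ) * |h i| ≤ μ * ∑ j, |h j|) {S : Finset ι}
    (hS : 2 * #S * μ < 1 + μ) : 2 * ∑ i ∈ S, |h i| < ∑ i, |h i| := by
  have hpos : 0 < ∑ i, |h i| := by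
    obtain ⟨i, hi⟩ := Function.ne_iff.mp hh
    exact sum_pos' (fun j _ => abs_nonneg (h j)) ⟨i, mem_univ i, abs_pos.mpr hi⟩
  have hsum : (1 + μ) * ∑ i ∈ S, |h i| ≤ #S * (μ * ∑ j, |h j|) := by
    rw [mul_sum]
    simpa [nsmul_eq_mul] using sum_le_card_nsmul S _ _ fun i _ => hcoh i
  have : (1 + μ) * (2 * ∑ i ∈ S, |h i|) < (1 + μ) * ∑ i, |h i| := by
    nlinarith [mul_lt_mul_of_pos_right hS hpos]
  exact lt_of_mul_lt_mul_left this (by linarith)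

lemma sum_abs_lt_sum_abs_add [DecidableEq ι] {S : Finset ι} {x h : ι → ℝ} (hx : ∀ i ∉ S, x i = 0)
    (hh : 2 * ∑ i ∈ S, |h i| < ∑ i, |h i|) : ∑ i, |x i| < ∑ i, |x i + h i| := by
  have hxS : ∑ i, |x i| = ∑ i ∈ S, |x i| :=
    (sum_subset (subset_univ S) fun i _ hi => by rw [hx i hi, abs_zero]).symm
  have hoff : ∑ i ∈ Sᶜ, |x i + h i| = ∑ i ∈ Sᶜ, |h i| :=
    sum_congr rfl fun i hi => by rw [hx i (mem_compl.mp hi), zero_add]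
  have hon : ∑ i ∈ S, |x i| ≤ ∑ i ∈ S, |x i + h i| + ∑ i ∈ S, |h i| := by
    rw [← sum_add_distrib]
    exact sum_le_sum fun i _ => by simpa using abs_sub (x i + h i) (h i)
  have hsplit_h := sum_add_sum_compl S fun i => |h i|
  have hsplit_xh := sum_add_sum_compl S fun i => |x i + h i|
  linarith

end

theorem l1_unique_recovery {d n : ℕ} (B : Matrix (Fin d) (Fin n) ℝ)
    (hunit : ∀ j : Fin n, ∑ k, (B k j) ^ 2 = 1)
    (qstar : Fin n → ℝ)
    (hsparse : (l0norm qstar : ℝ) < (1 / 2) * (1 + 1 / mutualCoherence B)) :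
    ∀ q : Fin n → ℝ, B.mulVec q = B.mulVec qstar → q ≠ qstar →
      ∑ i, |qstar i| < ∑ i, |q i| := by
  intro q hq hne
  set μ := mutualCoherence B
  set S := univ.filter fun i => qstar i ≠ 0
  have hμ : 0 ≤ μ := mutualCoherence_nonneg B
  have hS : 2 * #S * μ < 1 + μ := by
    rcases hμ.eq_or_lt with h0 | hpos
    · rw [← h0]
      norm_num
    · have := mul_lt_mul_of_pos_right hsparse hpos
      rw [show (1 / 2 * (1 + 1 / μ)) * μ = (1 + μ) / 2 by field_simp; ring] at this
      simp only [l0norm] at this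
      linarith
  have hker : (Bᵀ * B) *ᵥ (q - qstar) = 0 := by
    rw [← mulVec_mulVec, mulVec_sub, hq, sub_self, mulVec_zero]
  have hdiag : ∀ i, (Bᵀ * B) i i = 1 := fun i => by
    simpa [mul_apply, sq] using hunit i
  have hmass := two_mul_sum_abs_lt_of_abs_le hμ (sub_ne_zero.mpr hne)
    (one_add_mul_abs_le_of_mulVec_eq_zero hdiag
      (fun _ _ => abs_gram_le_mutualCoherence B) hker) hS
  have hsupp : ∀ i ∉ S, qstar i = 0 := fun i hi => by simpa [S] using hi
  simpa using sum_abs_lt_sum_abs_add hsupp hmass
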